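/- arXiv:2503.14347 — 3 statements merged into one kernel-verified Lean document; each statement's English description precedes it below -/
import Mathlib

section
/- For every real z ≥ 0 and every ε ∈ (0,1), cosh(z) ≥ √(1-ε²) · e^(εz). -/
/-!
Convexity of `exp` with weights `(1 ± ε) / 2` at the points `±z - log (1 ± ε)` gives, for every real `z`,
`cosh z ≥ exp (ε z) / ((1 + ε) ^ ((1 + ε) / 2) * (1 - ε) ^ ((1 - ε) / 2))`.
After taking logarithms, this constant dominates `√(1 - ε²)` iff
`ε (log (1 + ε) - log (1 - ε)) ≤ -2 log (1 - ε²)`, which holds term by term between the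
power series: `2 ε^(2k+2) / (2k+1) ≤ 2 ε^(2k+2) / (k+1)`.
-/

open Real

theorem mul_log_one_add_sub_log_one_sub_le {x : ℝ} (hx : |x| < 1) :
    x * (log (1 + x) - log (1 - x)) ≤ -2 * log (1 - x ^ 2) := by
  have hx2 : |x ^ 2| < 1 := by rw [abs_pow]; exact pow_lt_one₀ (abs_nonneg x) hx two_ne_zero
  have hodd := (hasSum_log_sub_log_of_abs_lt_one hx).mul_left x
  have heven := (hasSum_pow_div_log_of_abs_lt_one hx2).mul_left 2
  rw [mul_neg, ← neg_mul] at heven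
  refine hasSum_le (fun k => ?_) hodd heven
  have hpow : x * x ^ (2 * k + 1) = (x ^ 2) ^ (k + 1) := by ring
  calc x * (2 * (1 / (2 * k + 1)) * x ^ (2 * k + 1))
      = 2 * ((x ^ 2) ^ (k + 1) / (2 * k + 1)) := by rw [← hpow]; ring
    _ ≤ 2 * ((x ^ 2) ^ (k + 1) / (k + 1)) := by
      gcongr
      linarith [k.cast_nonneg (α := ℝ)]

theorem exp_mul_sub_le_cosh {ε : ℝ} (hε : |ε| < 1) (z : ℝ) :
    exp (ε * z - ((1 + ε) * log (1 + ε) + (1 - ε) * log (1 - ε)) / 2) ≤ cosh z := by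
  obtain ⟨hε₁, hε₂⟩ := abs_lt.mp hε
  have hp : 0 < 1 + ε := by linarith
  have hq : 0 < 1 - ε := by linarith
  calc exp (ε * z - ((1 + ε) * log (1 + ε) + (1 - ε) * log (1 - ε)) / 2)
      = exp ((1 + ε) / 2 * (z - log (1 + ε)) + (1 - ε) / 2 * (-z - log (1 - ε))) := by
        ring_nf
    _ ≤ (1 + ε) / 2 * exp (z - log (1 + ε)) + (1 - ε) / 2 * exp (-z - log (1 - ε)) :=
        convexOn_exp.2 (Set.mem_univ _) (Set.mem_univ _) (by positivity) (by positivity) (by ring)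
    _ = cosh z := by
        rw [exp_sub, exp_sub, exp_log hp, exp_log hq, cosh_eq]; field_simp

theorem log_one_sub_sq_le {ε : ℝ} (hε : |ε| < 1) :
    log (1 - ε ^ 2) ≤ -((1 + ε) * log (1 + ε) + (1 - ε) * log (1 - ε)) := by
  obtain ⟨hε₁, hε₂⟩ := abs_lt.mp hε
  have hsplit : log (1 - ε ^ 2) = log (1 + ε) + log (1 - ε) := by
    rw [← log_mul (by linarith) (by linarith)]; ring_nf
  have := mul_log_one_add_sub_log_one_sub_le hε
  rw [hsplit] at this ⊢
  linarith

theorem cosh_ge_sqrt_mul_exp_general (z : ℝ) (ε : ℝ) (hε : ε ∈ Set.Ioo (0:ℝ) 1) :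
    Real.cosh z ≥ Real.sqrt (1 - ε ^ 2) * Real.exp (ε * z) := by
  have habs : |ε| < 1 := abs_lt.mpr ⟨by linarith [hε.1], hε.2⟩
  have hpos : 0 < 1 - ε ^ 2 := by nlinarith [hε.1, hε.2]
  calc sqrt (1 - ε ^ 2) * exp (ε * z) = exp (log (1 - ε ^ 2) / 2 + ε * z) := by
        rw [sqrt_eq_rpow, rpow_def_of_pos hpos, exp_add]; ring_nf
    _ ≤ exp (ε * z - ((1 + ε) * log (1 + ε) + (1 - ε) * log (1 - ε)) / 2) := by
        gcongr; linarith [log_one_sub_sq_le habs]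
    _ ≤ cosh z := exp_mul_sub_le_cosh habs z

theorem cosh_ge_sqrt_mul_exp (z : ℝ) (hz : 0 ≤ z) (ε : ℝ) (hε : ε ∈ Set.Ioo (0:ℝ) 1) :
    Real.cosh z ≥ Real.sqrt (1 - ε ^ 2) * Real.exp (ε * z) :=
  cosh_ge_sqrt_mul_exp_general z ε hε
end

section
/- Let n ≥ 1 and let G(z) = ∫₀^z (√(1 + (n/(2y))²) - n/(2y)) dy. Then for every ε ∈ (0,1) and every z ≥ 0, G(z) ≥ εz + (n/2)·log(1-ε²). -/
/-!
With `a = n / 2`, for `y > 0` the integrand equals `y / (a + √(y² + a²))`, the derivative of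
`√(y² + a²) - a log (a + √(y² + a²))`, so `G` has a closed form. The bound then follows from
`log t ≤ t - 1` at `t = (a + √(z² + a²)) (1 - ε²) / (2a)` together with the Cauchy–Schwarz inequality
`2εz + (1 - ε²) a ≤ (1 + ε²) √(z² + a²)`; equality holds at the tangency point `z = 2εa / (1 - ε²)`.
-/

open Real

noncomputable def antiderivG (a y : ℝ) : ℝ :=
  √(y ^ 2 + a ^ 2) - a * log (a + √(y ^ 2 + a ^ 2))

theorem sqrt_one_add_div_sq_sub_div {y : ℝ} (hy : 0 < y) (a : ℝ) :
    √(1 + (a / y) ^ 2) - a / y = y / (a + √(y ^ 2 + a ^ 2)) := by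
  have hs : (√(y ^ 2 + a ^ 2)) ^ 2 = y ^ 2 + a ^ 2 := sq_sqrt (by positivity)
  have hsa : |a| < √(y ^ 2 + a ^ 2) := by
    rw [← sqrt_sq_eq_abs]
    exact sqrt_lt_sqrt (sq_nonneg a) (by nlinarith)
  have hpos : 0 < a + √(y ^ 2 + a ^ 2) := by linarith [neg_abs_le a]
  have hsqrt : √(1 + (a / y) ^ 2) = √(y ^ 2 + a ^ 2) / y := by
    rw [show 1 + (a / y) ^ 2 = (y ^ 2 + a ^ 2) / y ^ 2 by field_simp,
      sqrt_div' _ (sq_nonneg y), sqrt_sq hy.le]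
  rw [hsqrt, eq_div_iff hpos.ne']
  field_simp
  linear_combination hs

theorem two_mul_mul_add_le_sqrt (ε z a : ℝ) :
    2 * ε * z + (1 - ε ^ 2) * a ≤ (1 + ε ^ 2) * √(z ^ 2 + a ^ 2) := by
  rw [← sqrt_sq (by positivity : (0 : ℝ) ≤ 1 + ε ^ 2), ← sqrt_mul (by positivity)]
  apply le_sqrt_of_sq_le
  nlinarith [sq_nonneg ((1 - ε ^ 2) * z - 2 * ε * a)]

theorem antiderivG_zero {a : ℝ} (ha : 0 ≤ a) : antiderivG a 0 = a - a * log (2 * a) := by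
  rw [antiderivG, zero_pow two_ne_zero, zero_add, sqrt_sq ha, two_mul]

section

variable {a : ℝ} (ha : 0 < a)
include ha

theorem hasDerivAt_antiderivG (y : ℝ) :
    HasDerivAt (antiderivG a) (y / (a + √(y ^ 2 + a ^ 2))) y := by
  have hq : 0 < y ^ 2 + a ^ 2 := by positivity
  have hs : 0 < √(y ^ 2 + a ^ 2) := sqrt_pos.2 hq
  have hsqrt : HasDerivAt (fun y => √(y ^ 2 + a ^ 2)) (y / √(y ^ 2 + a ^ 2)) y := by
    convert ((hasDerivAt_pow 2 y).add_const (a ^ 2)).sqrt hq.ne' using 1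
    field_simp
    ring
  refine (hsqrt.sub (((hsqrt.const_add a).log (by positivity)).const_mul a)).congr_deriv ?_
  field_simp
  ring

theorem integral_sqrt_one_add_div_sq_sub_div {z : ℝ} (hz : 0 ≤ z) :
    ∫ y in (0 : ℝ)..z, (√(1 + (a / y) ^ 2) - a / y) = antiderivG a z - antiderivG a 0 := by
  have hcont : Continuous fun y => y / (a + √(y ^ 2 + a ^ 2)) :=
    continuous_id.div (by fun_prop) fun y => by positivity
  rw [← intervalIntegral.integral_eq_sub_of_hasDerivAt (fun y _ => hasDerivAt_antiderivG ha y)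
    (hcont.intervalIntegrable 0 z)]
  refine intervalIntegral.integral_congr_ae (.of_forall fun y hy => ?_)
  rw [Set.uIoc_of_le hz] at hy
  exact sqrt_one_add_div_sq_sub_div hy.1 a

theorem le_antiderivG_sub_antiderivG_zero {ε : ℝ} (hε : ε ^ 2 < 1) (z : ℝ) :
    ε * z + a * log (1 - ε ^ 2) ≤ antiderivG a z - antiderivG a 0 := by
  set s := √(z ^ 2 + a ^ 2)
  have hs : 0 ≤ s := sqrt_nonneg _
  have hε' : 0 < 1 - ε ^ 2 := by linarith
  have hlog : log ((a + s) * (1 - ε ^ 2) / (2 * a)) ≤ (a + s) * (1 - ε ^ 2) / (2 * a) - 1 :=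
    log_le_sub_one_of_pos (by positivity)
  rw [log_div (by positivity) (by positivity), log_mul (by positivity) hε'.ne'] at hlog
  have hlog' : a * log (a + s) + a * log (1 - ε ^ 2) - a * log (2 * a)
      ≤ (a + s) * (1 - ε ^ 2) / 2 - a := by
    have := mul_le_mul_of_nonneg_left hlog ha.le
    field_simp at this ⊢
    linarith
  rw [antiderivG_zero ha.le, antiderivG]
  linarith [two_mul_mul_add_le_sqrt ε z a]

end

theorem G_ge_linear (n : ℝ) (hn : 1 ≤ n) (ε : ℝ) (hε : ε ∈ Set.Ioo (0:ℝ) 1)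
    (z : ℝ) (hz : 0 ≤ z) :
    (∫ y in (0:ℝ)..z, (Real.sqrt (1 + (n / (2 * y)) ^ 2) - n / (2 * y)))
      ≥ ε * z + (n / 2) * Real.log (1 - ε ^ 2) := by
  have ha : 0 < n / 2 := by linarith
  have hε2 : ε ^ 2 < 1 := by nlinarith [hε.1, hε.2]
  simp only [← div_div]
  rw [integral_sqrt_one_add_div_sq_sub_div ha hz]
  exact le_antiderivG_sub_antiderivG_zero ha hε2 z
end

section
/- For all real numbers n > 0, σ > 0, t > 0: inf over ε ∈ (0,1) of exp( nε²/(2(1-ε²)) + σ²t²/(2ε²) ) equals exp( (√n + σt)²/2 - n/2 ), attained at ε* = √( σt/(σt + √n) ). -/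
/-!
Write `a = √n`, `b = σt` and `u = ε²`. Since `a²u/(1-u) = a²/(1-u) - a²`, twice the exponent is
`a²/(1-u) + b²/u - a²`, and by Sedrakyan's form of Cauchy–Schwarz
`a²/(1-u) + b²/u ≥ (a+b)²/((1-u) + u) = (a+b)²`, with equality when `a/(1-u) = b/u`,
i.e. at `u = b/(b+a)`.
-/

open Real Set

section Field

variable {K : Type*} [Field K]

theorem sq_div_div_eq_mul (a c : K) : a ^ 2 / (a / c) = a * c := by
  rcases eq_or_ne a 0 with rfl | ha
  · simp
  · rw [div_div_eq_mul_div, sq, mul_assoc, mul_div_cancel_left₀ _ ha]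

theorem sq_div_one_sub_add_sq_div_eq {a b : K} (h : b + a ≠ 0) :
    a ^ 2 / (1 - b / (b + a)) + b ^ 2 / (b / (b + a)) = (a + b) ^ 2 := by
  have hu : 1 - b / (b + a) = a / (b + a) := by field_simp; ring
  rw [hu, sq_div_div_eq_mul, sq_div_div_eq_mul]
  ring

theorem sq_mul_div_one_sub_add_div_eq (a c : K) {u : K} (hu₀ : u ≠ 0) (hu₁ : 1 - u ≠ 0) :
    a ^ 2 * u / (2 * (1 - u)) + c / (2 * u) = (a ^ 2 / (1 - u) + c / u - a ^ 2) / 2 := by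
  field_simp
  ring

variable [LinearOrder K] [IsStrictOrderedRing K]

theorem add_sq_div_add_le_sq_div_add_sq_div {a b x y : K} (hx : 0 < x) (hy : 0 < y) :
    (a + b) ^ 2 / (x + y) ≤ a ^ 2 / x + b ^ 2 / y := by
  simpa [Fin.sum_univ_two] using
    Finset.sq_sum_div_le_sum_sq_div Finset.univ ![a, b] (g := ![x, y])
      (by simp [Fin.forall_fin_two, hx, hy])

theorem div_add_mem_Ioo_zero_one {a b : K} (ha : 0 < a) (hb : 0 < b) :
    b / (b + a) ∈ Ioo (0 : K) 1 :=
  ⟨by positivity, (div_lt_one (by positivity)).2 (by linarith)⟩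

theorem add_sq_div_two_sub_le (a b : K) {u : K} (hu : u ∈ Ioo (0 : K) 1) :
    (a + b) ^ 2 / 2 - a ^ 2 / 2 ≤ a ^ 2 * u / (2 * (1 - u)) + b ^ 2 / (2 * u) := by
  have hsub : 0 < 1 - u := sub_pos.2 hu.2
  have hsedrakyan := add_sq_div_add_le_sq_div_add_sq_div (a := a) (b := b) hsub hu.1
  rw [sub_add_cancel, div_one] at hsedrakyan
  rw [sq_mul_div_one_sub_add_div_eq _ _ hu.1.ne' hsub.ne']
  linarith

theorem sq_mul_div_one_sub_add_sq_div_eq_of_div_add {a b : K} (ha : 0 < a) (hb : 0 < b) :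
    a ^ 2 * (b / (b + a)) / (2 * (1 - b / (b + a))) + b ^ 2 / (2 * (b / (b + a))) =
      (a + b) ^ 2 / 2 - a ^ 2 / 2 := by
  have hu := div_add_mem_Ioo_zero_one ha hb
  rw [sq_mul_div_one_sub_add_div_eq _ _ hu.1.ne' (sub_pos.2 hu.2).ne',
    sq_div_one_sub_add_sq_div_eq (by positivity)]
  ring

end Field

theorem sqrt_mem_Ioo_zero_one {u : ℝ} (hu : u ∈ Ioo (0 : ℝ) 1) : √u ∈ Ioo (0 : ℝ) 1 :=
  ⟨sqrt_pos.2 hu.1, (sqrt_lt' one_pos).2 (by simpa using hu.2)⟩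

theorem inf_exp_identity (n σ t : ℝ) (hn : 0 < n) (hσ : 0 < σ) (ht : 0 < t) :
    IsLeast
      ((fun ε : ℝ => Real.exp (n * ε ^ 2 / (2 * (1 - ε ^ 2)) + σ ^ 2 * t ^ 2 / (2 * ε ^ 2))) ''
        Set.Ioo (0:ℝ) 1)
      (Real.exp ((Real.sqrt n + σ * t) ^ 2 / 2 - n / 2)) ∧
    (Real.sqrt (σ * t / (σ * t + Real.sqrt n)) ∈ Set.Ioo (0:ℝ) 1 ∧
      Real.exp (n * (Real.sqrt (σ * t / (σ * t + Real.sqrt n))) ^ 2 /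
          (2 * (1 - (Real.sqrt (σ * t / (σ * t + Real.sqrt n))) ^ 2)) +
        σ ^ 2 * t ^ 2 / (2 * (Real.sqrt (σ * t / (σ * t + Real.sqrt n))) ^ 2))
        = Real.exp ((Real.sqrt n + σ * t) ^ 2 / 2 - n / 2)) := by
  obtain ⟨a, ha, rfl⟩ : ∃ a, 0 < a ∧ n = a ^ 2 := ⟨√n, sqrt_pos.2 hn, (sq_sqrt hn.le).symm⟩
  have hb : 0 < σ * t := mul_pos hσ ht
  rw [sqrt_sq ha.le, ← mul_pow σ t]
  generalize σ * t = b at hb ⊢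
  have hu := div_add_mem_Ioo_zero_one ha hb
  have hattained := sq_mul_div_one_sub_add_sq_div_eq_of_div_add ha hb
  rw [← sq_sqrt hu.1.le] at hattained
  refine ⟨⟨⟨_, sqrt_mem_Ioo_zero_one hu, congrArg exp hattained⟩, ?_⟩,
    sqrt_mem_Ioo_zero_one hu, congrArg exp hattained⟩
  rintro _ ⟨ε, hε, rfl⟩
  exact exp_le_exp.2 <|
    add_sq_div_two_sub_le a b ⟨pow_pos hε.1 2, pow_lt_one₀ hε.1.le hε.2 two_ne_zero⟩
end
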